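/- Let O be a non-empty 1-orientation on a graph G and let e be its bioriented edge. The following are equivalent: (a) O is e-rooted; (b) t^O(Z) > 0 for every nonempty Z ⊆ V with e not an edge of G[Z]; (c) t^O(Z) > 0 for every nonempty Z ⊆ V such that G[Z] is connected and e is not an edge of G[Z]; (d) |d^O_Z| > g(Z) − 1 for every Z ⊊ V such that G[Z] is connected. -/

import Mathlib

/-!
Common framework: finite vertex-weighted multigraphs (loops and multiple edges
allowed), generalized orientations, divisors, contractions, and poset gadgets.

A graph is encoded by a finite set `V ⊆ ℕ` of vertices, a finite set `E ⊆ ℕ`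
of edges, an "ends" function assigning to each edge its ordered pair of
end-vertices (the two components encode the two half-edges), and a weight
function `w : ℕ → ℕ`.

A generalized orientation is a function `ℕ → Option EdgeDir`, where `none`
means the edge is absent (an orientation on a spanning subgraph `G − S` takes
the value `none` exactly on edges outside `E \ S`), `fwd`/`bwd` give the edge a
single direction, and `bi` makes the edge bioriented.
-/

open scoped Classical
open Finset

/-- Direction of an edge under a generalized orientation. -/
inductive EdgeDir : Type
  | fwd
  | bwd
  | bi
deriving DecidableEq

/-- Generalized orientation data. -/
abbrev Orient : Type := ℕ → Option EdgeDir

/-- The number of ending (target) half-edges at the vertex `v` of an edge with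
end-pair `p`, given its direction `d`.  A one-way oriented edge has exactly
one target end; a bioriented edge has both ends as targets. -/
def dirT : Option EdgeDir → ℕ × ℕ → ℕ → ℕ
  | none, _, _ => 0
  | some EdgeDir.fwd, p, v => if p.2 = v then 1 else 0
  | some EdgeDir.bwd, p, v => if p.1 = v then 1 else 0
  | some EdgeDir.bi, p, v => (if p.1 = v then 1 else 0) + (if p.2 = v then 1 else 0)

/-- Restriction of orientation data to the set `D` of kept edges. -/
def restr (O : Orient) (D : Finset ℕ) : Orient := fun e => if e ∈ D then O e else none

/-- A finite vertex-weighted multigraph. -/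
structure MGraph : Type where
  V : Finset ℕ
  E : Finset ℕ
  ends : ℕ → ℕ × ℕ
  w : ℕ → ℕ
  ends_mem : ∀ e ∈ E, (ends e).1 ∈ V ∧ (ends e).2 ∈ V

namespace MGraph

variable (G : MGraph)

/-- Edge set of the induced subgraph `(G−S)[Z]`: edges of `G − S` with both
ends in `Z`. -/
def indEdges (S Z : Finset ℕ) : Finset ℕ :=
  (G.E \ S).filter fun e => (G.ends e).1 ∈ Z ∧ (G.ends e).2 ∈ Z

/-- The cut `E(Z, Zᶜ)` in `G − S`: edges of `G − S` with exactly one end in `Z`. -/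
def cutEdges (S Z : Finset ℕ) : Finset ℕ :=
  (G.E \ S).filter fun e =>
    ((G.ends e).1 ∈ Z ∧ (G.ends e).2 ∉ Z) ∨ ((G.ends e).1 ∉ Z ∧ (G.ends e).2 ∈ Z)

/-- Adjacency via an edge belonging to `F ∩ E`. -/
def adjOn (F : Finset ℕ) (u v : ℕ) : Prop :=
  ∃ e ∈ F ∩ G.E, G.ends e = (u, v) ∨ G.ends e = (v, u)

/-- Number of connected components of the subgraph with vertex set `W` and
edge set `F`. -/
noncomputable def ncomp (W F : Finset ℕ) : ℕ :=
  Nat.card (Quot (fun u v : {x : ℕ // x ∈ W} => G.adjOn F u.1 v.1))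

/-- The subgraph with vertex set `W` and edge set `F` is connected. -/
def ConnSub (W F : Finset ℕ) : Prop := G.ncomp W F = 1

/-- `G` is connected. -/
def Connected : Prop := G.ConnSub G.V G.E

/-- Genus of the subgraph with vertex set `W` and edge set `F`:
`∑_{v ∈ W} w(v) − |W| + |F| + c`. -/
noncomputable def subGenus (W F : Finset ℕ) : ℤ :=
  (∑ v ∈ W, (G.w v : ℤ)) - (W.card : ℤ) + (((F ∩ G.E).card : ℤ)) + (G.ncomp W F : ℤ)

/-- The genus of `G`. -/
noncomputable def genus : ℤ := G.subGenus G.V G.E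

/-- The degree of a vertex: the number of half-edges having `v` as end. -/
def deg (v : ℕ) : ℕ :=
  ∑ e ∈ G.E, ((if (G.ends e).1 = v then 1 else 0) + (if (G.ends e).2 = v then 1 else 0))

/-- `e` is a bridge of `G − S`: removing it increases the number of connected
components. -/
def IsBridge (S : Finset ℕ) (e : ℕ) : Prop :=
  e ∈ G.E \ S ∧ G.ncomp G.V (G.E \ S) < G.ncomp G.V (G.E \ insert e S)

/-- The set of bridges of `G − S`. -/
noncomputable def bridges (S : Finset ℕ) : Finset ℕ := (G.E \ S).filter (G.IsBridge S)

/-- `T` is a cut of `G`, i.e. `T = E(Z, Zᶜ)` for some `∅ ⊊ Z ⊊ V`. -/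
def IsCut (T : Finset ℕ) : Prop :=
  ∃ Z, Z ⊆ G.V ∧ Z.Nonempty ∧ Z ≠ G.V ∧ T = G.cutEdges ∅ Z

/-- `W` is (the vertex set of) a connected component of `G − S`. -/
def IsCompOf (S W : Finset ℕ) : Prop :=
  W ⊆ G.V ∧ W.Nonempty ∧ G.ConnSub W (G.indEdges S W) ∧ G.cutEdges S W = ∅

/-- The poset `A^b_G`: for `b = 0` the sets `S ⊆ E` with `G − S` bridgeless,
for `b = 1` the sets `S ⊆ E` with `G − S` connected. -/
def Ab (b : ℕ) (S : Finset ℕ) : Prop :=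
  S ⊆ G.E ∧ ((b = 0 ∧ ∀ e, ¬ G.IsBridge S e) ∨ (b = 1 ∧ G.ConnSub G.V (G.E \ S)))

/-- `G` is a stable graph of genus `g`: connected, of genus `g`, and every
vertex of weight `0` has degree at least `3`. -/
noncomputable def Stable (g : ℕ) : Prop :=
  G.Connected ∧ G.genus = (g : ℤ) ∧ ∀ v ∈ G.V, G.w v = 0 → 3 ≤ G.deg v

/-! ### Generalized orientations on spanning subgraphs -/

/-- `O` is orientation data for the spanning subgraph `G − S` (it is defined
exactly on the edges of `G − S`). -/
def IsOrientOn (S : Finset ℕ) (O : Orient) : Prop :=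
  ∀ e, O e ≠ none ↔ e ∈ G.E \ S

/-- The set of bioriented edges of `O`. -/
def biE (O : Orient) : Finset ℕ := G.E.filter fun e => O e = some EdgeDir.bi

/-- `t^O_v`: the number of half-edges having `v` as target. -/
def tOr (O : Orient) (v : ℕ) : ℕ := ∑ e ∈ G.E, dirT (O e) (G.ends e) v

/-- `t^O(Z)`: the number of edges of `G − S` not contained in `(G−S)[Z]`
having a target in `Z`. -/
def tCut (S : Finset ℕ) (O : Orient) (Z : Finset ℕ) : ℕ :=
  ∑ e ∈ (G.E \ S) \ G.indEdges S Z, ∑ v ∈ Z, dirT (O e) (G.ends e) v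

/-- The divisor `d^O` of a `b`-orientation `O` on `G − S`:
`d^O_v = w(v) − 1 + t^O_v` if `G − S` has edges, and `d^O_v = w(v) − 1 + b`
otherwise; it is supported on `V`. -/
noncomputable def divOr (S : Finset ℕ) (b : ℕ) (O : Orient) : ℕ → ℤ :=
  fun v => if v ∈ G.V then
      (if G.E \ S = ∅ then (G.w v : ℤ) - 1 + (b : ℤ) else (G.w v : ℤ) - 1 + (G.tOr O v : ℤ))
    else 0

/-- Equivalence of generalized orientations on `G − S`:  both are orientations
on `G − S` and they have the same divisor. -/
noncomputable def equivOr (S : Finset ℕ) (b : ℕ) (O O' : Orient) : Prop :=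
  G.IsOrientOn S O ∧ G.IsOrientOn S O' ∧ G.divOr S b O = G.divOr S b O'

/-- `O` is a totally cyclic orientation on `G − S`: every nonempty cut
`E(Z,Zᶜ)` contains an edge with target in `Z` and an edge with target in `Zᶜ`. -/
def TotCyc (S : Finset ℕ) (O : Orient) : Prop :=
  ∀ Z : Finset ℕ, Z ⊆ G.V → Z.Nonempty → Z ≠ G.V → (G.cutEdges S Z).Nonempty →
    (∃ e ∈ G.cutEdges S Z, ∃ v ∈ Z, 0 < dirT (O e) (G.ends e) v) ∧
    (∃ e ∈ G.cutEdges S Z, ∃ v ∈ G.V \ Z, 0 < dirT (O e) (G.ends e) v)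

/-- `O` is `e₀`-rooted on `G − S`: for every `Z ⊊ V` with `e₀` an edge of
`(G−S)[Z]`, the cut `E(Z,Zᶜ)` contains an edge with target in `Zᶜ`. -/
def RootedAt (S : Finset ℕ) (O : Orient) (e₀ : ℕ) : Prop :=
  ∀ Z : Finset ℕ, Z ⊆ G.V → Z ≠ G.V → e₀ ∈ G.indEdges S Z →
    ∃ e ∈ G.cutEdges S Z, ∃ v ∈ G.V \ Z, 0 < dirT (O e) (G.ends e) v

/-- `O` is a rooted `1`-orientation on `G − S`:  it has exactly one bioriented
edge, at which it is rooted.  By convention, if `G − S` consists of a single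
vertex (and no edges), the empty orientation is rooted. -/
def Rooted1 (S : Finset ℕ) (O : Orient) : Prop :=
  (∃ e₀, G.biE O = {e₀} ∧ G.RootedAt S O e₀) ∨ (G.E \ S = ∅ ∧ G.V.card = 1)

/-- `O ∈ 𝒪^b(G−S)`:  for `b = 0`, a totally cyclic orientation on `G − S`;
for `b = 1`, a rooted `1`-orientation on `G − S`. -/
def MemOb (S : Finset ℕ) (b : ℕ) (O : Orient) : Prop :=
  G.IsOrientOn S O ∧
    ((b = 0 ∧ G.biE O = ∅ ∧ G.TotCyc S O) ∨ (b = 1 ∧ G.Rooted1 S O))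

/-- `O` is a `b`-orientation on `G − S` (exactly `b` bioriented edges; by
convention the empty orientation on a one-vertex edgeless graph counts as a
`1`-orientation). -/
def IsbOr (S : Finset ℕ) (b : ℕ) (O : Orient) : Prop :=
  G.IsOrientOn S O ∧
    ((G.biE O).card = b ∨ (G.E \ S = ∅ ∧ G.V.card = 1 ∧ b = 1))

/-! ### Posets of orientations on spanning subgraphs -/

/-- The order of `𝒪𝒫^b_G` on pairs `(S, O_S)`:  `(S,O_S) ≤ (T,O_T)` iff
`T ⊆ S` and the restriction of `O_T` to `G − S` is `O_S`. -/
def leOP (p q : Finset ℕ × Orient) : Prop :=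
  q.1 ⊆ p.1 ∧ restr q.2 (G.E \ p.1) = p.2

/-- The order of `𝒪̄𝒫^b_G` on pairs (representing classes): `(S,O̅_S) ≤ (T,O̅_T)`
iff `T ⊆ S` and some representative of `O̅_T` restricts on `G − S` to some
representative of `O̅_S`. -/
noncomputable def leOPbar (b : ℕ) (p q : Finset ℕ × Orient) : Prop :=
  q.1 ⊆ p.1 ∧ ∃ O', G.equivOr q.1 b O' q.2 ∧
    G.equivOr p.1 b (restr O' (G.E \ p.1)) p.2

/-- Equality in `𝒪̄𝒫^b_G`: same subgraph and equivalent orientations. -/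
noncomputable def eqOP (b : ℕ) (p q : Finset ℕ × Orient) : Prop :=
  p.1 = q.1 ∧ G.equivOr p.1 b p.2 q.2

/-- Membership in `𝒪𝒫^b_G`. -/
def POb (b : ℕ) (p : Finset ℕ × Orient) : Prop :=
  G.Ab b p.1 ∧ G.MemOb p.1 b p.2

/-! ### Stable divisors -/

/-- Stable divisors on `G − S` of degree `g(G−S) − c(G−S) + b` (`b = 0, 1`):
for `b = 1`, `G − S` is connected, the degree is `g(G−S)` and
`|d_Z| > g(Z) − 1` for every `Z ⊆ V`; for `b = 0`, the restriction of `d` to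
every connected component `W` of `G − S` has degree `g(W) − 1` and satisfies
`|d_Z| > g(Z) − 1` for every `∅ ≠ Z ⊊ W`. -/
noncomputable def StableDiv (S : Finset ℕ) (b : ℕ) (d : ℕ → ℤ) : Prop :=
  (∀ v, v ∉ G.V → d v = 0) ∧
  ((b = 1 ∧ G.ConnSub G.V (G.E \ S) ∧
      (∑ v ∈ G.V, d v) = G.subGenus G.V (G.E \ S) ∧
      ∀ Z ⊆ G.V, G.subGenus Z (G.indEdges S Z) - 1 < ∑ v ∈ Z, d v) ∨
   (b = 0 ∧ ∀ W, G.IsCompOf S W →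
      (∑ v ∈ W, d v) = G.subGenus W (G.indEdges S W) - 1 ∧
      ∀ Z ⊆ W, Z.Nonempty → Z ≠ W →
        G.subGenus Z (G.indEdges S Z) - 1 < ∑ v ∈ Z, d v))

/-! ### Contractions -/

/-- The relation identifying the two ends of each edge in `S₀`. -/
def conRel (S₀ : Finset ℕ) (u v : ℕ) : Prop :=
  ∃ e ∈ S₀ ∩ G.E, G.ends e = (u, v) ∨ G.ends e = (v, u)

/-- Representative (the least element) of the class of `v` under the
equivalence generated by identifying the ends of the edges in `S₀`. -/
noncomputable def crep (S₀ : Finset ℕ) (v : ℕ) : ℕ :=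
  sInf {u | Relation.EqvGen (G.conRel S₀) u v}

/-- The (weighted) edge contraction `G/S₀`: every connected component of the
subgraph spanned by `S₀` is contracted to a single vertex, whose weight is the
genus of that component; `E(G/S₀) = E(G) \ S₀`. -/
noncomputable def contract (S₀ : Finset ℕ) : MGraph where
  V := G.V.image (G.crep S₀)
  E := G.E \ S₀
  ends := fun e => (G.crep S₀ (G.ends e).1, G.crep S₀ (G.ends e).2)
  w := fun v =>
    (G.subGenus (G.V.filter fun u => G.crep S₀ u = v)
      (G.indEdges (G.E \ S₀) (G.V.filter fun u => G.crep S₀ u = v))).toNat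
  ends_mem := by
    intro e he
    rw [Finset.mem_sdiff] at he
    exact ⟨Finset.mem_image_of_mem _ (G.ends_mem e he.1).1,
           Finset.mem_image_of_mem _ (G.ends_mem e he.1).2⟩

/-- Deletion of the edges in `T` (a spanning subgraph, as a graph). -/
def ddel (T : Finset ℕ) : MGraph where
  V := G.V
  E := G.E \ T
  ends := G.ends
  w := G.w
  ends_mem := fun e he => G.ends_mem e (Finset.mem_sdiff.mp he).1

/-- Pullback `γ* T` of an edge set along the contraction `γ : G → G/S₀`:
`T ∪ (G−T)_br` for `b = 0`, and `T` for `b = 1`. -/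
noncomputable def pullStar (b : ℕ) (T : Finset ℕ) : Finset ℕ :=
  if b = 0 then T ∪ G.bridges T else T

/-- Pushforward of a divisor along the contraction `γ : G → G/S₀`:
`(γ_* d)_v = ∑_{z ∈ γ⁻¹(v)} d_z`. -/
noncomputable def pushDiv (S₀ : Finset ℕ) (d : ℕ → ℤ) : ℕ → ℤ :=
  fun v => ∑ z ∈ G.V.filter (fun u => G.crep S₀ u = v), d z

/-- The divisor `c^{γ,S}` on `G/S₀`: `c^{γ,S}_v = #{e ∈ S₀ ∩ S : γ(e) = v}`. -/
noncomputable def cGamma (S₀ S : Finset ℕ) : ℕ → ℤ :=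
  fun v => ((((S₀ ∩ S) ∩ G.E).filter (fun e => G.crep S₀ (G.ends e).1 = v)).card : ℤ)

/-- The relation "`q` is a value of `γ̄_*` at `p`" for the contraction
`γ : G → G/S₀` acting on classes of orientations: `q` is the restriction to
`(G/S₀) − γ_* S` of a representative of the class of `p` having no bioriented
edge in `S₀` (when `(G/S₀) − γ_*S` has no edges, any representative serves). -/
noncomputable def pushRel (S₀ : Finset ℕ) (b : ℕ) (p q : Finset ℕ × Orient) : Prop :=
  ∃ O', G.equivOr p.1 b O' p.2 ∧
    ((∀ e ∈ S₀, O' e ≠ some EdgeDir.bi) ∨ G.E \ (S₀ ∪ p.1) = ∅) ∧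
    q.1 = p.1 \ S₀ ∧ q.2 = restr O' (G.E \ (S₀ ∪ p.1))

/-! ### Isomorphisms and directed reachability -/

/-- `(fV, fE)` is an isomorphism from `G` to `H`. -/
def IsoMaps (H : MGraph) (fV fE : ℕ → ℕ) : Prop :=
  Set.BijOn fV ↑G.V ↑H.V ∧ Set.BijOn fE ↑G.E ↑H.E ∧
  (∀ e ∈ G.E, H.ends (fE e) = (fV (G.ends e).1, fV (G.ends e).2) ∨
              H.ends (fE e) = (fV (G.ends e).2, fV (G.ends e).1)) ∧
  (∀ v ∈ G.V, H.w (fV v) = G.w v)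

/-- `G` and `H` are isomorphic graphs. -/
def Iso (H : MGraph) : Prop := ∃ fV fE, G.IsoMaps H fV fE

/-- The edge-contraction relation: `G ≤ H` iff `H = G/S₀` (up to isomorphism)
for some `S₀ ⊆ E(G)`. -/
noncomputable def contractLE (H : MGraph) : Prop :=
  ∃ S₀ ⊆ G.E, (G.contract S₀).Iso H

/-- One step from `u` to `v` along an `O`-directed edge (a bioriented edge may
be traversed in both directions). -/
def dirStep (O : Orient) (u v : ℕ) : Prop :=
  ∃ e ∈ G.E,
    (O e = some EdgeDir.fwd ∧ G.ends e = (u, v)) ∨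
    (O e = some EdgeDir.bwd ∧ G.ends e = (v, u)) ∨
    (O e = some EdgeDir.bi ∧ (G.ends e = (u, v) ∨ G.ends e = (v, u)))

/-- There is an `O`-directed path from the (bioriented) edge `e` to the
vertex `v`: a directed path starting at one of the ends of `e` and ending
at `v`. -/
def dirReachFromEdge (O : Orient) (e v : ℕ) : Prop :=
  ∃ u, ((G.ends e).1 = u ∨ (G.ends e).2 = u) ∧
    Relation.ReflTransGen (G.dirStep O) u v

end MGraph

/-! ### Generic poset gadgets (for sets with an order, modulo an equivalence) -/

/-- `le` is a partial order on `{a | P a}` modulo the identification `eqv`. -/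
def IsPartialOrderOnMod {α : Type*} (P : α → Prop) (eqv le : α → α → Prop) : Prop :=
  (∀ a, P a → le a a) ∧
  (∀ a b c, P a → P b → P c → le a b → le b c → le a c) ∧
  (∀ a b, P a → P b → le a b → le b a → eqv a b)

/-- `le` is a partial order on `{a | P a}`. -/
def IsPartialOrderOn {α : Type*} (P : α → Prop) (le : α → α → Prop) : Prop :=
  IsPartialOrderOnMod P (· = ·) le

/-- `a'` covers `a` in `{a | P a}` ordered by `le`, modulo `eqv`. -/
def CoversOnMod {α : Type*} (P : α → Prop) (eqv le : α → α → Prop) (a a' : α) : Prop :=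
  P a ∧ P a' ∧ le a a' ∧ ¬ eqv a a' ∧
    ∀ c, P c → le a c → le c a' → (eqv c a ∨ eqv c a')

/-- `ρ` is a rank on `{a | P a}` ordered by `le`, modulo `eqv`:  along every
covering relation it increases by exactly `1`. -/
def IsRankOnMod {α : Type*} (P : α → Prop) (eqv le : α → α → Prop) (ρ : α → ℕ) : Prop :=
  ∀ a a', CoversOnMod P eqv le a a' → ρ a' = ρ a + 1

/-- `a'` covers `a` in `{a | P a}` ordered by `le`. -/
def CoversOn {α : Type*} (P : α → Prop) (le : α → α → Prop) : α → α → Prop :=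
  CoversOnMod P (· = ·) le

/-- `ρ` is a rank on `{a | P a}` ordered by `le`. -/
def IsRankOn {α : Type*} (P : α → Prop) (le : α → α → Prop) (ρ : α → ℕ) : Prop :=
  IsRankOnMod P (· = ·) le ρ

/-- `f` is a quotient of posets from `({a | P a}, lea)` onto `({b | Q b}, leb)`:
an order-preserving surjection such that any relation downstairs lifts to a
relation upstairs. -/
def IsPosetQuotient {α β : Type*} (P : α → Prop) (Q : β → Prop)
    (lea : α → α → Prop) (leb : β → β → Prop) (f : α → β) : Prop :=
  (∀ a, P a → Q (f a)) ∧
  (∀ a a', P a → P a' → lea a a' → leb (f a) (f a')) ∧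
  (∀ b, Q b → ∃ a, P a ∧ f a = b) ∧
  (∀ b b', Q b → Q b' → leb b b' →
    ∃ a a', P a ∧ P a' ∧ f a = b ∧ f a' = b' ∧ lea a a')

/-! ### Structures over the moduli of stable graphs -/

/-- Pairs `(G, S)` with `G` stable of genus `g` and `S ∈ A^b_G`. -/
noncomputable def PairStab (g b : ℕ) (p : MGraph × Finset ℕ) : Prop :=
  p.1.Stable g ∧ p.1.Ab b p.2

/-- Isomorphism of pairs `(G, S)`. -/
def PairIso (p q : MGraph × Finset ℕ) : Prop :=
  ∃ fV fE, p.1.IsoMaps q.1 fV fE ∧ p.2.image fE = q.2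

/-- The order on `A^b_g`: `(G,S) ≤ (H,T)` iff there is a contraction
`γ : G → H` (a contraction of `G` followed by an isomorphism onto `H`) with
`γ* T ⊆ S`. -/
noncomputable def AgLE (b : ℕ) (p q : MGraph × Finset ℕ) : Prop :=
  ∃ S₀ ⊆ p.1.E, ∃ fV fE, (p.1.contract S₀).IsoMaps q.1 fV fE ∧
    p.1.pullStar b (((p.1.contract S₀).E).filter fun e => fE e ∈ q.2) ⊆ p.2

/-- Triples `(G, S, O̅_S)` with `G` stable of genus `g`, `S ∈ A^b_G` and
`O_S ∈ 𝒪^b(G−S)` (representing elements of `𝒪̄𝒫^b_g`). -/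
noncomputable def TripP (g b : ℕ) (x : MGraph × Finset ℕ × Orient) : Prop :=
  x.1.Stable g ∧ x.1.Ab b x.2.1 ∧ x.1.MemOb x.2.1 b x.2.2

/-- Identification of triples: an isomorphism of the underlying graphs
carrying the subgraph and the class of the orientation (i.e. its divisor) of
one to the other. -/
noncomputable def TripEq (b : ℕ) (x y : MGraph × Finset ℕ × Orient) : Prop :=
  ∃ fV fE, x.1.IsoMaps y.1 fV fE ∧ x.2.1.image fE = y.2.1 ∧
    ∀ v ∈ x.1.V, y.1.divOr y.2.1 b y.2.2 (fV v) = x.1.divOr x.2.1 b x.2.2 v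

/-- The order on `𝒪̄𝒫^b_g`: `(G, O̅_S) ≤ (H, O̅_T)` iff there is a contraction
`γ : G → H` with `γ* T ⊆ S` and `γ̄_* O̅_S ≤ O̅_T`, the latter meaning that the
restriction of `O̅_T` to `H − γ_* S` equals `γ̄_* O̅_S` (compared through the
isomorphism, via the divisors). -/
noncomputable def OPgLE (b : ℕ) (x y : MGraph × Finset ℕ × Orient) : Prop :=
  ∃ S₀ ⊆ x.1.E, ∃ fV fE, (x.1.contract S₀).IsoMaps y.1 fV fE ∧
    x.1.pullStar b (((x.1.contract S₀).E).filter fun e => fE e ∈ y.2.1) ⊆ x.2.1 ∧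
    ∃ O', x.1.equivOr x.2.1 b O' x.2.2 ∧
      ((∀ e ∈ S₀, O' e ≠ some EdgeDir.bi) ∨ x.1.E \ (S₀ ∪ x.2.1) = ∅) ∧
      ∀ v ∈ (x.1.contract S₀).V,
        y.1.divOr ((x.2.1 \ S₀).image fE) b
            (restr y.2.2 (y.1.E \ (x.2.1 \ S₀).image fE)) (fV v)
          = (x.1.contract S₀).divOr (x.2.1 \ S₀) b
              (restr O' (x.1.E \ (S₀ ∪ x.2.1))) v

/-!
The cut condition in `RootedAt` for `Z` says exactly `0 < t^O(V \ Z)`; this gives (a) ⇔ (b),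
the sets `Z` containing exactly one end of `e` being handled by the biorientation of `e`.
For (c) ⇒ (b), the connected component `Z₁` of a vertex in `G[Z]` satisfies
`t^O(Z₁) ≤ t^O(Z)`, as no edge of `G[Z]` leaves `Z₁`. Finally, counting the target half-edges
at the vertices of a connected `Z` gives `|d^O_Z| = g(Z) - 1 + [e ∈ G[Z]] + t^O(Z)`,
hence (c) ⇔ (d).
-/

lemma eq_or_eq_of_dirT_pos {d : Option EdgeDir} {p : ℕ × ℕ} {v : ℕ} (h : 0 < dirT d p v) :
    p.1 = v ∨ p.2 = v := by
  by_contra! hne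
  rcases d with _ | _ | _ | _ <;> simp [dirT, hne.1, hne.2] at h

lemma sum_dirT_eq_zero {d : Option EdgeDir} {p : ℕ × ℕ} {Z : Finset ℕ} (h₁ : p.1 ∉ Z)
    (h₂ : p.2 ∉ Z) : ∑ v ∈ Z, dirT d p v = 0 :=
  Finset.sum_eq_zero fun v hv => Nat.eq_zero_of_not_pos fun h => by
    rcases eq_or_eq_of_dirT_pos h with rfl | rfl <;> contradiction

lemma sum_dirT_of_mem (d : EdgeDir) {p : ℕ × ℕ} {Z : Finset ℕ} (h₁ : p.1 ∈ Z) (h₂ : p.2 ∈ Z) :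
    ∑ v ∈ Z, dirT (some d) p v = if d = EdgeDir.bi then 2 else 1 := by
  cases d <;> simp [dirT, Finset.sum_add_distrib, h₁, h₂]

namespace MGraph

variable {G : MGraph} {S : Finset ℕ} {O : Orient}

lemma ends_mem_of_mem_indEdges {Z : Finset ℕ} {e : ℕ} (he : e ∈ G.indEdges S Z) :
    (G.ends e).1 ∈ Z ∧ (G.ends e).2 ∈ Z :=
  (Finset.mem_filter.mp he).2

lemma indEdges_mono {Z₁ Z : Finset ℕ} (h : Z₁ ⊆ Z) : G.indEdges S Z₁ ⊆ G.indEdges S Z :=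
  Finset.monotone_filter_right _ fun _ _ he => ⟨h he.1, h he.2⟩

lemma ConnSub.nonempty {W F : Finset ℕ} (h : G.ConnSub W F) : W.Nonempty := by
  rw [Finset.nonempty_iff_ne_empty]
  rintro rfl
  have : IsEmpty {x : ℕ // x ∈ (∅ : Finset ℕ)} := ⟨fun x => Finset.notMem_empty _ x.2⟩
  simp [ConnSub, ncomp] at h

lemma apply_eq_bi_of_biE_eq_singleton {e : ℕ} (hbi : G.biE O = {e}) :
    O e = some EdgeDir.bi :=
  (Finset.mem_filter.mp (hbi ▸ Finset.mem_singleton_self e : e ∈ G.biE O)).2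

lemma apply_eq_bi_iff_of_biE_eq_singleton {e e' : ℕ} (hbi : G.biE O = {e}) (he' : e' ∈ G.E) :
    O e' = some EdgeDir.bi ↔ e' = e := by
  simpa [biE, he'] using Finset.ext_iff.mp hbi e'

lemma mem_sdiff_of_biE_eq_singleton {e : ℕ} (hO : G.IsOrientOn S O) (hbi : G.biE O = {e}) :
    e ∈ G.E \ S :=
  (hO e).mp (by simp [apply_eq_bi_of_biE_eq_singleton hbi])

lemma tCut_pos_iff {Z : Finset ℕ} :
    0 < G.tCut S O Z ↔
      ∃ e ∈ (G.E \ S) \ G.indEdges S Z, ∃ v ∈ Z, 0 < dirT (O e) (G.ends e) v := by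
  simp only [tCut, Finset.sum_pos_iff]

lemma tCut_compl_pos_iff {Z : Finset ℕ} :
    0 < G.tCut S O (G.V \ Z) ↔
      ∃ e ∈ G.cutEdges S Z, ∃ v ∈ G.V \ Z, 0 < dirT (O e) (G.ends e) v := by
  rw [tCut_pos_iff]
  refine exists_congr fun e => ⟨fun ⟨he, v, hv, hpos⟩ => ⟨?_, v, hv, hpos⟩,
    fun ⟨he, v, hv, hpos⟩ => ⟨?_, v, hv, hpos⟩⟩
  all_goals
    have hends := G.ends_mem e
    rcases eq_or_eq_of_dirT_pos hpos with rfl | rfl <;> simp_all [indEdges, cutEdges]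

lemma rootedAt_iff_forall_tCut_pos {e : ℕ} (he : e ∈ G.E \ S) (hbi : O e = some EdgeDir.bi) :
    G.RootedAt S O e ↔ ∀ Z ⊆ G.V, Z.Nonempty → e ∉ G.indEdges S Z → 0 < G.tCut S O Z := by
  simp only [RootedAt, ← tCut_compl_pos_iff]
  constructor
  · intro hroot Z hZV hZ heZ
    by_cases hend : (G.ends e).1 ∈ Z ∨ (G.ends e).2 ∈ Z
    · refine tCut_pos_iff.mpr ⟨e, Finset.mem_sdiff.mpr ⟨he, heZ⟩, ?_⟩
      rcases hend with h | h <;> exact ⟨_, h, by simp [dirT, hbi]⟩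
    · have heW : e ∈ G.indEdges S (G.V \ Z) := by
        have := G.ends_mem e (Finset.mem_sdiff.mp he).1
        simp_all [indEdges]
      have hW : G.V \ Z ≠ G.V := fun h => hZ.elim fun z hz =>
        Finset.disjoint_left.mp (Finset.sdiff_eq_self_iff_disjoint.mp h) (hZV hz) hz
      simpa [Finset.sdiff_sdiff_eq_self hZV] using hroot _ Finset.sdiff_subset hW heW
  · intro h Z hZV hZ heZ
    refine h _ Finset.sdiff_subset (Finset.sdiff_nonempty.mpr fun hV => hZ ?_) fun heW => ?_
    · exact Finset.Subset.antisymm hZV hV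
    · exact (Finset.mem_sdiff.mp (ends_mem_of_mem_indEdges heW).1).2
        (ends_mem_of_mem_indEdges heZ).1

lemma tCut_le_of_subset_of_closed {Z₁ Z : Finset ℕ} (hsub : Z₁ ⊆ Z)
    (hclosed : ∀ e ∈ G.indEdges S Z, (G.ends e).1 ∈ Z₁ ↔ (G.ends e).2 ∈ Z₁) :
    G.tCut S O Z₁ ≤ G.tCut S O Z := by
  unfold tCut
  calc ∑ e ∈ (G.E \ S) \ G.indEdges S Z₁, ∑ v ∈ Z₁, dirT (O e) (G.ends e) v
      = ∑ e ∈ (G.E \ S) \ G.indEdges S Z, ∑ v ∈ Z₁, dirT (O e) (G.ends e) v := by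
        refine (Finset.sum_subset (Finset.sdiff_subset_sdiff le_rfl (indEdges_mono hsub))
          fun e he heZ => ?_).symm
        have := hclosed e (by simp_all)
        exact sum_dirT_eq_zero (by simp_all [indEdges]) (by simp_all [indEdges])
    _ ≤ ∑ e ∈ (G.E \ S) \ G.indEdges S Z, ∑ v ∈ Z, dirT (O e) (G.ends e) v :=
        Finset.sum_le_sum fun _ _ => Finset.sum_le_sum_of_subset hsub

noncomputable def indComponent (S Z : Finset ℕ) (z : ℕ) : Finset ℕ :=
  Z.filter (Relation.ReflTransGen (G.adjOn (G.indEdges S Z)) z)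

lemma indComponent_subset (S Z : Finset ℕ) (z : ℕ) : G.indComponent S Z z ⊆ Z :=
  Finset.filter_subset _ _

lemma mem_indComponent_self {Z : Finset ℕ} {z : ℕ} (hz : z ∈ Z) : z ∈ G.indComponent S Z z :=
  Finset.mem_filter.mpr ⟨hz, .refl⟩

lemma mem_of_adjOn_indEdges {Z : Finset ℕ} {u v : ℕ} (h : G.adjOn (G.indEdges S Z) u v) :
    u ∈ Z ∧ v ∈ Z := by
  obtain ⟨e, he, hends | hends⟩ := h <;>
    have := ends_mem_of_mem_indEdges (Finset.mem_inter.mp he).1 <;>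
    simp_all

lemma ends_mem_indComponent_iff {Z : Finset ℕ} {z e : ℕ} (he : e ∈ G.indEdges S Z) :
    (G.ends e).1 ∈ G.indComponent S Z z ↔ (G.ends e).2 ∈ G.indComponent S Z z := by
  have hE : e ∈ G.indEdges S Z ∩ G.E :=
    Finset.mem_inter.mpr ⟨he, (Finset.mem_sdiff.mp (Finset.mem_filter.mp he).1).1⟩
  obtain ⟨h₁, h₂⟩ := ends_mem_of_mem_indEdges he
  simp only [indComponent, Finset.mem_filter, h₁, h₂, true_and]
  exact ⟨fun h => h.tail ⟨e, hE, Or.inl rfl⟩, fun h => h.tail ⟨e, hE, Or.inr rfl⟩⟩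

lemma connSub_indComponent {Z : Finset ℕ} {z : ℕ} (hz : z ∈ Z) :
    G.ConnSub (G.indComponent S Z z) (G.indEdges S (G.indComponent S Z z)) := by
  set C := G.indComponent S Z z
  have hzC : z ∈ C := mem_indComponent_self hz
  let r := fun u v : {x // x ∈ C} => G.adjOn (G.indEdges S C) u.1 v.1
  suffices h : ∀ u, Relation.ReflTransGen (G.adjOn (G.indEdges S Z)) z u →
      ∀ hu : u ∈ C, Quot.mk r ⟨u, hu⟩ = Quot.mk r ⟨z, hzC⟩ by
    rw [ConnSub, ncomp, Nat.card_eq_one_iff_unique]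
    refine ⟨⟨fun a b => ?_⟩, ⟨Quot.mk r ⟨z, hzC⟩⟩⟩
    induction a using Quot.ind with | _ a =>
    induction b using Quot.ind with | _ b =>
    rw [h a.1 (Finset.mem_filter.mp a.2).2, h b.1 (Finset.mem_filter.mp b.2).2]
  intro u hzu
  induction hzu with
  | refl => exact fun _ => rfl
  | @tail u v hzu huv ih =>
    intro hv
    have hu : u ∈ C := Finset.mem_filter.mpr ⟨(mem_of_adjOn_indEdges huv).1, hzu⟩
    rw [← ih hu]
    obtain ⟨e, he, hends⟩ := huv
    refine Quot.sound ⟨e, Finset.mem_inter.mpr ⟨?_, (Finset.mem_inter.mp he).2⟩, hends.symm⟩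
    have := (Finset.mem_inter.mp he).1
    rcases hends with h | h <;> simp_all [indEdges]

lemma forall_tCut_pos_iff_forall_connected (e : ℕ) :
    (∀ Z ⊆ G.V, Z.Nonempty → e ∉ G.indEdges S Z → 0 < G.tCut S O Z) ↔
      ∀ Z ⊆ G.V, Z.Nonempty → G.ConnSub Z (G.indEdges S Z) →
        e ∉ G.indEdges S Z → 0 < G.tCut S O Z := by
  refine ⟨fun h Z hZV hZ _ heZ => h Z hZV hZ heZ, fun h Z hZV ⟨z, hz⟩ heZ => ?_⟩
  have hC := G.indComponent_subset S Z z
  calc 0 < G.tCut S O (G.indComponent S Z z) :=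
        h _ (hC.trans hZV) ⟨z, mem_indComponent_self hz⟩ (connSub_indComponent hz)
          fun he => heZ (indEdges_mono hC he)
    _ ≤ G.tCut S O Z := tCut_le_of_subset_of_closed hC fun _ => ends_mem_indComponent_iff

lemma sum_tOr_eq {e : ℕ} (hO : G.IsOrientOn S O) (hbi : G.biE O = {e}) (Z : Finset ℕ) :
    ∑ v ∈ Z, G.tOr O v =
      (G.indEdges S Z).card + (if e ∈ G.indEdges S Z then 1 else 0) + G.tCut S O Z := by
  have hS : ∑ v ∈ Z, G.tOr O v = ∑ e' ∈ G.E \ S, ∑ v ∈ Z, dirT (O e') (G.ends e') v := by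
    simp only [tOr]
    rw [Finset.sum_comm]
    refine (Finset.sum_subset Finset.sdiff_subset fun e' he' he'S => ?_).symm
    rw [show O e' = none by simpa using mt (hO e').mp he'S]
    simp [dirT]
  have hind : ∀ e' ∈ G.indEdges S Z,
      ∑ v ∈ Z, dirT (O e') (G.ends e') v = 1 + if e' = e then 1 else 0 := by
    intro e' he'
    have he'E : e' ∈ G.E \ S := (Finset.mem_filter.mp he').1
    obtain ⟨d, hd⟩ := Option.ne_none_iff_exists'.mp ((hO e').mpr he'E)
    obtain ⟨h₁, h₂⟩ := ends_mem_of_mem_indEdges he'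
    have hbi' := apply_eq_bi_iff_of_biE_eq_singleton hbi (Finset.mem_sdiff.mp he'E).1
    rw [hd, Option.some_inj] at hbi'
    rw [hd, sum_dirT_of_mem d h₁ h₂]
    by_cases hee : e' = e <;> simp [hee, hbi']
  rw [hS, ← Finset.sum_sdiff (s₁ := G.indEdges S Z) (Finset.filter_subset _ _),
    Finset.sum_congr rfl hind, Finset.sum_add_distrib, Finset.sum_ite_eq', tCut]
  simp only [Finset.sum_const, smul_eq_mul, mul_one]
  ring

lemma sum_divOr_eq {e : ℕ} (hO : G.IsOrientOn S O) (hbi : G.biE O = {e}) {Z : Finset ℕ}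
    (hZV : Z ⊆ G.V) (hconn : G.ConnSub Z (G.indEdges S Z)) :
    ∑ v ∈ Z, G.divOr S 1 O v =
      G.subGenus Z (G.indEdges S Z) - 1 + (if e ∈ G.indEdges S Z then 1 else 0) +
        G.tCut S O Z := by
  have hES : G.E \ S ≠ ∅ := Finset.ne_empty_of_mem (mem_sdiff_of_biE_eq_singleton hO hbi)
  have hdiv : ∀ v ∈ Z, G.divOr S 1 O v = G.w v - 1 + G.tOr O v := fun v hv => by
    simp [divOr, hZV hv, hES]
  have hcard : G.indEdges S Z ∩ G.E = G.indEdges S Z :=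
    Finset.inter_eq_left.mpr fun e' he' => (Finset.mem_sdiff.mp (Finset.mem_filter.mp he').1).1
  rw [Finset.sum_congr rfl hdiv, subGenus, hcard, hconn, Finset.sum_add_distrib,
    Finset.sum_sub_distrib, ← Nat.cast_sum (f := G.tOr O), sum_tOr_eq hO hbi]
  push_cast
  simp only [Finset.sum_const, nsmul_eq_mul, mul_one]
  ring

lemma subGenus_sub_one_lt_sum_divOr_iff {e : ℕ} (hO : G.IsOrientOn S O) (hbi : G.biE O = {e})
    {Z : Finset ℕ} (hZV : Z ⊆ G.V) (hconn : G.ConnSub Z (G.indEdges S Z)) :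
    G.subGenus Z (G.indEdges S Z) - 1 < ∑ v ∈ Z, G.divOr S 1 O v ↔
      e ∈ G.indEdges S Z ∨ 0 < G.tCut S O Z := by
  rw [sum_divOr_eq hO hbi hZV hconn]
  split_ifs <;> simp_all

lemma forall_tCut_pos_iff_forall_subGenus_lt {e : ℕ} (hO : G.IsOrientOn S O)
    (hbi : G.biE O = {e}) :
    (∀ Z ⊆ G.V, Z.Nonempty → G.ConnSub Z (G.indEdges S Z) →
        e ∉ G.indEdges S Z → 0 < G.tCut S O Z) ↔
      ∀ Z ⊆ G.V, Z ≠ G.V → G.ConnSub Z (G.indEdges S Z) →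
        G.subGenus Z (G.indEdges S Z) - 1 < ∑ v ∈ Z, G.divOr S 1 O v := by
  have he := mem_sdiff_of_biE_eq_singleton hO hbi
  refine forall₂_congr fun Z hZV => ⟨fun h hZ hconn => ?_, fun h hZ hconn heZ => ?_⟩
  · rw [subGenus_sub_one_lt_sum_divOr_iff hO hbi hZV hconn, or_iff_not_imp_left]
    exact h hconn.nonempty hconn
  · have hZ' : Z ≠ G.V := by
      rintro rfl
      exact heZ (Finset.mem_filter.mpr ⟨he, G.ends_mem e (Finset.mem_sdiff.mp he).1⟩)
    exact ((subGenus_sub_one_lt_sum_divOr_iff hO hbi hZV hconn).mp (h hZ' hconn)).resolve_left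
      heZ

end MGraph

/-- Characterizations of rooted (non-empty) `1`-orientations
with bioriented edge `e`: (a) `e`-rooted ⟺ (b) `t^O(Z) > 0` for every
nonempty `Z ⊆ V` with `e ∉ G[Z]` ⟺ (c) idem for connected `G[Z]` ⟺
(d) `|d^O_Z| > g(Z) − 1` for every `Z ⊊ V` with `G[Z]` connected. -/
theorem rooted_tfae (G : MGraph) (O : Orient) (e : ℕ)
    (hO : G.IsOrientOn ∅ O) (hbi : G.biE O = {e}) :
    (G.RootedAt ∅ O e ↔
      ∀ Z ⊆ G.V, Z.Nonempty → e ∉ G.indEdges ∅ Z → 0 < G.tCut ∅ O Z) ∧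
    (G.RootedAt ∅ O e ↔
      ∀ Z ⊆ G.V, Z.Nonempty → G.ConnSub Z (G.indEdges ∅ Z) →
        e ∉ G.indEdges ∅ Z → 0 < G.tCut ∅ O Z) ∧
    (G.RootedAt ∅ O e ↔
      ∀ Z ⊆ G.V, Z ≠ G.V → G.ConnSub Z (G.indEdges ∅ Z) →
        G.subGenus Z (G.indEdges ∅ Z) - 1 < ∑ v ∈ Z, G.divOr ∅ 1 O v) := by
  have hab := MGraph.rootedAt_iff_forall_tCut_pos (MGraph.mem_sdiff_of_biE_eq_singleton hO hbi)
    (MGraph.apply_eq_bi_of_biE_eq_singleton hbi)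
  have hbc := MGraph.forall_tCut_pos_iff_forall_connected (G := G) (S := ∅) (O := O) e
  have hcd := MGraph.forall_tCut_pos_iff_forall_subGenus_lt hO hbi
  exact ⟨hab, hab.trans hbc, hab.trans (hbc.trans hcd)⟩
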